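/- Let q, t, c ∈ ℂ with |q| < 1, |t| < 1, |cq| < 1 and c ≠ 1. Then ∑_{n=1}^∞ t^n / ( (q;q)_n · (1 − cq^n) ) = ( t/(1−c) ) · ∑_{n=1}^∞ (1 − c^n) · q^{n−1} / (t q^{n−1};q)_∞. -/

import Mathlib

/-!
Euler's identity `1 / (x;q)_∞ = ∑ x^m / (q;q)_m` follows from the functional equation
`E(q x) = (1 - x) E(x)` of the series `E(x) = ∑ x^m / (q;q)_m`: iterating it gives
`E(q^N x) = (x;q)_N E(x)`, and `E(q^N x) → E(0) = 1`. Applied with `x = t q^n`, it turns the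
right-hand side of the theorem into an absolutely convergent double series in `(n, m)`. Summing
over `n` first is a geometric computation,
`∑_n (1 - c^(n+1)) q^(n(m+1)) = (1 - c) / ((1 - q^(m+1)) (1 - c q^(m+1)))`,
which leaves exactly the `m`-th term of the left-hand side.
-/

/-- Finite q-Pochhammer symbol `(x;q)_n = ∏_{k=0}^{n-1} (1 - x q^k)`. -/
noncomputable def qPoch (x q : ℂ) (n : ℕ) : ℂ := ∏ k ∈ Finset.range n, (1 - x * q ^ k)

/-- Infinite q-Pochhammer symbol `(x;q)_∞ = ∏_{k=0}^{∞} (1 - x q^k)`. -/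
noncomputable def qPochInf (x q : ℂ) : ℂ := ∏' k : ℕ, (1 - x * q ^ k)

/-- Gaussian binomial coefficient `[n k]_q`, equal to `0` for `k > n`. -/
noncomputable def gbinom (q : ℂ) (n k : ℕ) : ℂ :=
  if k ≤ n then qPoch q q n / (qPoch q q k * qPoch q q (n - k)) else 0

open Filter Topology

section QPochhammer

variable {x q : ℂ}

lemma norm_mul_pow_le (x : ℂ) (hq : ‖q‖ ≤ 1) (k : ℕ) : ‖x * q ^ k‖ ≤ ‖x‖ := by
  rw [norm_mul, norm_pow]
  exact mul_le_of_le_one_right (norm_nonneg x) (pow_le_one₀ (norm_nonneg q) hq)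

lemma norm_mul_pow_lt_one (hx : ‖x‖ < 1) (hq : ‖q‖ ≤ 1) (k : ℕ) : ‖x * q ^ k‖ < 1 :=
  (norm_mul_pow_le x hq k).trans_lt hx

lemma one_sub_ne_zero_of_norm_lt_one {z : ℂ} (hz : ‖z‖ < 1) : 1 - z ≠ 0 := by
  rintro h
  simp [show z = 1 by linear_combination -h] at hz

lemma qPoch_succ (x q : ℂ) (n : ℕ) : qPoch x q (n + 1) = qPoch x q n * (1 - x * q ^ n) :=
  Finset.prod_range_succ _ n

lemma qPoch_ne_zero (hx : ‖x‖ < 1) (hq : ‖q‖ ≤ 1) (n : ℕ) : qPoch x q n ≠ 0 :=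
  Finset.prod_ne_zero_iff.2 fun k _ ↦ one_sub_ne_zero_of_norm_lt_one (norm_mul_pow_lt_one hx hq k)

lemma summable_norm_mul_pow (x : ℂ) (hq : ‖q‖ < 1) : Summable fun k : ℕ ↦ ‖x * q ^ k‖ := by
  simpa [norm_mul, norm_pow] using (summable_geometric_of_lt_one (norm_nonneg q) hq).mul_left ‖x‖

lemma multipliable_qPoch (x : ℂ) (hq : ‖q‖ < 1) : Multipliable fun k : ℕ ↦ 1 - x * q ^ k := by
  simpa [sub_eq_add_neg] using multipliable_one_add_of_summable (f := fun k ↦ -(x * q ^ k))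
    (by simpa using summable_norm_mul_pow x hq)

lemma tendsto_qPoch_qPochInf (x : ℂ) (hq : ‖q‖ < 1) :
    Tendsto (qPoch x q) atTop (𝓝 (qPochInf x q)) :=
  (multipliable_qPoch x hq).hasProd.tendsto_prod_nat

lemma qPochInf_ne_zero (hx : ‖x‖ < 1) (hq : ‖q‖ < 1) : qPochInf x q ≠ 0 := by
  simpa [qPochInf, sub_eq_add_neg] using tprod_one_add_ne_zero_of_summable
    (fun k ↦ by simpa [sub_eq_add_neg] using
      one_sub_ne_zero_of_norm_lt_one (norm_mul_pow_lt_one hx hq.le k))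
    (f := fun k ↦ -(x * q ^ k)) (by simpa using summable_norm_mul_pow x hq)

/-- `(q;q)_n` converges to the nonzero limit `(q;q)_∞`, so its inverses are bounded. -/
lemma exists_norm_inv_qPoch_le (hq : ‖q‖ < 1) : ∃ C, ∀ n, ‖(qPoch q q n)⁻¹‖ ≤ C := by
  have hlim := (tendsto_qPoch_qPochInf q hq).inv₀ (qPochInf_ne_zero hq hq)
  obtain ⟨C, hC⟩ := isBounded_iff_forall_norm_le.1 (Metric.isBounded_range_of_tendsto _ hlim)
  exact ⟨C, fun n ↦ hC _ ⟨n, rfl⟩⟩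

end QPochhammer

section EulerSeries

variable {x q : ℂ}

noncomputable def eulerSeries (q x : ℂ) : ℂ := ∑' n : ℕ, x ^ n / qPoch q q n

lemma norm_pow_div_qPoch_le {C : ℝ} (hC : ∀ n, ‖(qPoch q q n)⁻¹‖ ≤ C) (n : ℕ) :
    ‖x ^ n / qPoch q q n‖ ≤ C * ‖x‖ ^ n := by
  rw [div_eq_mul_inv, norm_mul, norm_pow, mul_comm]
  exact mul_le_mul_of_nonneg_right (hC n) (by positivity)

lemma summable_eulerSeries (hq : ‖q‖ < 1) (hx : ‖x‖ < 1) :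
    Summable fun n : ℕ ↦ x ^ n / qPoch q q n := by
  obtain ⟨C, hC⟩ := exists_norm_inv_qPoch_le hq
  exact .of_norm_bounded ((summable_geometric_of_lt_one (norm_nonneg x) hx).mul_left C)
    (norm_pow_div_qPoch_le hC)

lemma eulerSeries_mul_left (hq : ‖q‖ < 1) (hx : ‖x‖ < 1) :
    eulerSeries q (q * x) = (1 - x) * eulerSeries q x := by
  have hqx : ‖q * x‖ < 1 := by simpa [mul_comm] using norm_mul_pow_lt_one hx hq.le 1
  have hshift (n : ℕ) : x ^ (n + 1) / qPoch q q (n + 1) - (q * x) ^ (n + 1) / qPoch q q (n + 1)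
      = x * (x ^ n / qPoch q q n) := by
    have hP := qPoch_ne_zero hq hq.le n
    have hfactor := one_sub_ne_zero_of_norm_lt_one (norm_mul_pow_lt_one hq hq.le n)
    rw [qPoch_succ]
    field_simp
    ring
  have hdiff := (summable_eulerSeries hq hx).sub (summable_eulerSeries hq hqx)
  have hsub : eulerSeries q x - eulerSeries q (q * x) = x * eulerSeries q x := by
    rw [eulerSeries, eulerSeries, ← (summable_eulerSeries hq hx).tsum_sub
      (summable_eulerSeries hq hqx), hdiff.tsum_eq_zero_add]
    simp only [pow_zero, sub_self, zero_add, hshift, tsum_mul_left]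
  linear_combination -hsub

lemma eulerSeries_pow_mul (hq : ‖q‖ < 1) (hx : ‖x‖ < 1) (N : ℕ) :
    eulerSeries q (q ^ N * x) = qPoch x q N * eulerSeries q x := by
  induction N with
  | zero => simp [qPoch]
  | succ N ih =>
    have hN : ‖q ^ N * x‖ < 1 := by simpa [mul_comm] using norm_mul_pow_lt_one hx hq.le N
    rw [pow_succ', mul_assoc, eulerSeries_mul_left hq hN, ih, qPoch_succ]
    ring

lemma tendsto_eulerSeries_pow_mul (hq : ‖q‖ < 1) (hx : ‖x‖ < 1) :
    Tendsto (fun N : ℕ ↦ eulerSeries q (q ^ N * x)) atTop (𝓝 1) := by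
  obtain ⟨C, hC⟩ := exists_norm_inv_qPoch_le hq
  have hzero : Tendsto (fun N : ℕ ↦ q ^ N * x) atTop (𝓝 0) := by
    simpa using (tendsto_pow_atTop_nhds_zero_of_norm_lt_one hq).mul_const x
  have hlim (n : ℕ) : Tendsto (fun N : ℕ ↦ (q ^ N * x) ^ n / qPoch q q n) atTop
      (𝓝 ((0 : ℂ) ^ n / qPoch q q n)) :=
    (hzero.pow n).div_const _
  have hbound : ∀ N n, ‖(q ^ N * x) ^ n / qPoch q q n‖ ≤ C * ‖x‖ ^ n := fun N n ↦
    (norm_pow_div_qPoch_le hC n).trans <| mul_le_mul_of_nonneg_left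
      (pow_le_pow_left₀ (norm_nonneg _) (by simpa [mul_comm] using norm_mul_pow_le x hq.le N) n)
      ((norm_nonneg _).trans (hC 0))
  have hE0 : ∑' n : ℕ, (0 : ℂ) ^ n / qPoch q q n = 1 := by
    rw [tsum_eq_single 0 fun n hn ↦ by simp [hn]]
    simp [qPoch]
  rw [← hE0]
  exact tendsto_tsum_of_dominated_convergence
    ((summable_geometric_of_lt_one (norm_nonneg x) hx).mul_left C) hlim
    (Eventually.of_forall hbound)

theorem qPochInf_mul_eulerSeries (hq : ‖q‖ < 1) (hx : ‖x‖ < 1) :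
    qPochInf x q * eulerSeries q x = 1 :=
  tendsto_nhds_unique ((tendsto_qPoch_qPochInf x hq).mul_const _)
    ((tendsto_eulerSeries_pow_mul hq hx).congr (eulerSeries_pow_mul hq hx))

end EulerSeries

lemma hasSum_one_sub_pow_succ_mul_pow {a c : ℂ} (ha : ‖a‖ < 1) (hca : ‖c * a‖ < 1) :
    HasSum (fun n : ℕ ↦ (1 - c ^ (n + 1)) * a ^ n) ((1 - c) / ((1 - a) * (1 - c * a))) := by
  have h1 := one_sub_ne_zero_of_norm_lt_one ha
  have h2 := one_sub_ne_zero_of_norm_lt_one hca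
  have hterm : (fun n : ℕ ↦ (1 - c ^ (n + 1)) * a ^ n) = fun n ↦ a ^ n - c * (c * a) ^ n := by
    funext n; ring
  rw [hterm, show (1 - c) / ((1 - a) * (1 - c * a)) = (1 - a)⁻¹ - c * (1 - c * a)⁻¹ by
    field_simp; ring]
  exact (hasSum_geometric_of_norm_lt_one ha).sub ((hasSum_geometric_of_norm_lt_one hca).mul_left c)

lemma summable_mul_pow_div_qPoch {a : ℕ → ℂ} {q t : ℂ} (ha : Summable fun n ↦ ‖a n‖)
    (hq : ‖q‖ < 1) (ht : ‖t‖ < 1) :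
    Summable (Function.uncurry fun n m ↦ a n * ((t * q ^ n) ^ m / qPoch q q m)) := by
  obtain ⟨C, hC⟩ := exists_norm_inv_qPoch_le hq
  refine .of_norm_bounded (summable_mul_of_summable_norm (f := fun n ↦ ‖a n‖)
    (g := fun m ↦ C * ‖t‖ ^ m) (by simpa using ha) ?_) fun ⟨n, m⟩ ↦ ?_
  · simpa [abs_of_nonneg ((norm_nonneg _).trans (hC 0))] using
      (summable_geometric_of_lt_one (norm_nonneg t) ht).mul_left C
  · rw [Function.uncurry_apply_pair, norm_mul]
    refine mul_le_mul_of_nonneg_left ((norm_pow_div_qPoch_le hC _).trans ?_) (norm_nonneg _)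
    exact mul_le_mul_of_nonneg_left (pow_le_pow_left₀ (norm_nonneg _)
      (norm_mul_pow_le t hq.le _) _) ((norm_nonneg _).trans (hC 0))

theorem stmt14 (q t c : ℂ) (hq : ‖q‖ < 1) (ht : ‖t‖ < 1)
    (hcq : ‖c * q‖ < 1) (hc : c ≠ 1) :
    ∑' n : ℕ, t ^ (n + 1) / (qPoch q q (n + 1) * (1 - c * q ^ (n + 1)))
      = t / (1 - c) * ∑' n : ℕ, (1 - c ^ (n + 1)) * q ^ n / qPochInf (t * q ^ n) q := by
  have hqm (m : ℕ) : ‖q ^ (m + 1)‖ < 1 := by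
    simpa [pow_succ'] using norm_mul_pow_lt_one hq hq.le m
  have hcqm (m : ℕ) : ‖c * q ^ (m + 1)‖ < 1 := by
    simpa [pow_succ', mul_assoc] using norm_mul_pow_lt_one hcq hq.le m
  have hcoef : Summable fun n : ℕ ↦ ‖(1 - c ^ (n + 1)) * q ^ n‖ :=
    summable_norm_iff.2 (hasSum_one_sub_pow_succ_mul_pow hq hcq).summable
  have hrow (n : ℕ) : (1 - c ^ (n + 1)) * q ^ n / qPochInf (t * q ^ n) q
      = ∑' m : ℕ, (1 - c ^ (n + 1)) * q ^ n * ((t * q ^ n) ^ m / qPoch q q m) := by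
    rw [tsum_mul_left, ← eulerSeries, div_eq_mul_inv,
      inv_eq_of_mul_eq_one_right (qPochInf_mul_eulerSeries hq (norm_mul_pow_lt_one ht hq.le n))]
  have hcol (m : ℕ) : ∑' n : ℕ, (1 - c ^ (n + 1)) * q ^ n * ((t * q ^ n) ^ m / qPoch q q m)
      = t ^ m / qPoch q q m * ((1 - c) / ((1 - q ^ (m + 1)) * (1 - c * q ^ (m + 1)))) := by
    rw [← (hasSum_one_sub_pow_succ_mul_pow (hqm m) (hcqm m)).tsum_eq, ← tsum_mul_left]
    exact tsum_congr fun n ↦ by ring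
  rw [tsum_congr hrow, ← (summable_mul_pow_div_qPoch hcoef hq ht).tsum_comm, tsum_congr hcol,
    ← tsum_mul_left]
  refine tsum_congr fun m ↦ ?_
  have hPm := qPoch_ne_zero hq hq.le m
  have hqm' := one_sub_ne_zero_of_norm_lt_one (hqm m)
  have hcqm' := one_sub_ne_zero_of_norm_lt_one (hcqm m)
  have hc' := sub_ne_zero.2 hc.symm
  rw [qPoch_succ, ← pow_succ']
  field_simp
  ring
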